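/- In the setting of the two-dimensional sigma model (g : ℝ² → symmetric 2×2 matrices smooth with det g < 0 everywhere, √g := √(−det g), g^{αβ} the inverse entries, X : ℝ² → ℝ^D smooth), define for each ρ the Euler–Lagrange expression E_ρ[X] := ∂_+( √g g^{+β} G_{ρν}(X) ∂_βX^ν + B_{ρν}(X) ∂_−X^ν ) + ∂_−( √g g^{−β} G_{ρν}(X) ∂_βX^ν − B_{ρν}(X) ∂_+X^ν ) − ½ √g g^{αβ} ∂_αX^μ ∂_βX^ν ∂_ρG_{μν}(X) − ∂_ρB_{μν}(X) ∂_+X^μ ∂_−X^ν. Let (ζ, b) be a Killing pair and define the Noether current j⁺ := √g g^{+β} ζ_μ(X) ∂_βX^μ + b_μ(X) ∂_−X^μ and j⁻ := √g g^{−β} ζ_μ(X) ∂_βX^μ − b_μ(X) ∂_+X^μ, where ζ_μ := G_{μν}ζ^ν. If E_ρ[X] = 0 identically for all ρ, then ∂_+ j⁺ + ∂_− j⁻ = 0 identically. -/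

import Mathlib

/-!
With `c := b - ζ ⌟ B`, the currents are `j^α = ζ^ρ(X) P^α_ρ ± c_μ(X) ∂_∓X^μ`, where `P^α_ρ` are the
canonical momenta whose divergence appears in `E_ρ`. Differentiating, the first part gives
`ζ^ρ ∂_α P^α_ρ` (replaced by the force terms on shell) plus `∂_α X^σ ∂_σ ζ^ρ P^α_ρ`, and the second
part is the pull-back of the two-form `dc`. The sum of the remaining terms is
`½ √g g^{αβ} ∂_αX^μ ∂_βX^ν (ℒ_ζ G)_{μν} + ∂_+X^μ ∂_-X^ν (ζ ⌟ H + db)_{μν}`, and the Killing pair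
equation says precisely that its symmetric part `ℒ_ζ G` and its antisymmetric part `ζ ⌟ H + db`
both vanish.
-/

noncomputable section

/-- Partial derivative of `f` at `x` in the `μ`-th coordinate direction. -/
def pd {D : ℕ} (μ : Fin D) (f : (Fin D → ℝ) → ℝ) (x : Fin D → ℝ) : ℝ :=
  fderiv ℝ f x (Pi.single μ 1)

/-- A smooth real-valued function. -/
def Sm {D : ℕ} (f : (Fin D → ℝ) → ℝ) : Prop := ContDiff ℝ (⊤ : ℕ∞) f

/-- A smooth vector field on `ℝ^D`. -/
def SmoothVF {D : ℕ} (V : (Fin D → ℝ) → Fin D → ℝ) : Prop := ∀ μ, Sm fun x => V x μ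

/-- A smooth field of 2-tensors on `ℝ^D`. -/
def Smooth2T {D : ℕ} (T : (Fin D → ℝ) → Fin D → Fin D → ℝ) : Prop :=
  ∀ μ ν, Sm fun x => T x μ ν

/-- The connection coefficients `Γ_{μν,ρ} = ½(∂_μG_{νρ} + ∂_νG_{μρ} − ∂_ρG_{μν})`. -/
def Gam {D : ℕ} (G : (Fin D → ℝ) → Fin D → Fin D → ℝ) (μ ν ρ : Fin D) (x : Fin D → ℝ) : ℝ :=
  (pd μ (fun y => G y ν ρ) x + pd ν (fun y => G y μ ρ) x - pd ρ (fun y => G y μ ν) x) / 2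

/-- The torsion `H_{μνρ} = ∂_μB_{νρ} + ∂_νB_{ρμ} + ∂_ρB_{μν}`. -/
def Htor {D : ℕ} (B : (Fin D → ℝ) → Fin D → Fin D → ℝ) (μ ν ρ : Fin D) (x : Fin D → ℝ) : ℝ :=
  pd μ (fun y => B y ν ρ) x + pd ν (fun y => B y ρ μ) x + pd ρ (fun y => B y μ ν) x

/-- `Γ⁺_{μν,ρ} = Γ_{μν,ρ} + ½H_{μνρ}`. -/
def GamP {D : ℕ} (G B : (Fin D → ℝ) → Fin D → Fin D → ℝ) (μ ν ρ : Fin D) (x : Fin D → ℝ) : ℝ :=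
  Gam G μ ν ρ x + Htor B μ ν ρ x / 2

/-- `Γ⁻_{μν,ρ} = Γ_{μν,ρ} − ½H_{μνρ}`. -/
def GamM {D : ℕ} (G B : (Fin D → ℝ) → Fin D → Fin D → ℝ) (μ ν ρ : Fin D) (x : Fin D → ℝ) : ℝ :=
  Gam G μ ν ρ x - Htor B μ ν ρ x / 2

/-- The lowered components `V_μ = G_{μν}V^ν` of a vector field. -/
def lowerV {D : ℕ} (G : (Fin D → ℝ) → Fin D → Fin D → ℝ)
    (V : (Fin D → ℝ) → Fin D → ℝ) (μ : Fin D) (x : Fin D → ℝ) : ℝ :=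
  ∑ ν, G x μ ν * V x ν

/-- The covariant derivative `D⁺_μV_ν = G_{νρ}∂_μV^ρ + Γ⁺_{μρ,ν}V^ρ`. -/
def Dp {D : ℕ} (G B : (Fin D → ℝ) → Fin D → Fin D → ℝ)
    (V : (Fin D → ℝ) → Fin D → ℝ) (μ ν : Fin D) (x : Fin D → ℝ) : ℝ :=
  (∑ ρ, G x ν ρ * pd μ (fun y => V y ρ) x) + ∑ ρ, GamP G B μ ρ ν x * V x ρ

/-- The covariant derivative `D⁻_μV_ν = G_{νρ}∂_μV^ρ + Γ⁻_{μρ,ν}V^ρ`. -/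
def Dm {D : ℕ} (G B : (Fin D → ℝ) → Fin D → Fin D → ℝ)
    (V : (Fin D → ℝ) → Fin D → ℝ) (μ ν : Fin D) (x : Fin D → ℝ) : ℝ :=
  (∑ ρ, G x ν ρ * pd μ (fun y => V y ρ) x) + ∑ ρ, GamM G B μ ρ ν x * V x ρ

/-- The Lie derivative of the metric:
`(ℒ_ζG)_{μν} = ζ^ρ∂_ρG_{μν} + ∂_μζ^ρ·G_{ρν} + ∂_νζ^ρ·G_{μρ}`. -/
def lieG {D : ℕ} (G : (Fin D → ℝ) → Fin D → Fin D → ℝ)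
    (ζ : (Fin D → ℝ) → Fin D → ℝ) (μ ν : Fin D) (x : Fin D → ℝ) : ℝ :=
  (∑ ρ, ζ x ρ * pd ρ (fun y => G y μ ν) x)
    + (∑ ρ, pd μ (fun y => ζ y ρ) x * G x ρ ν)
    + ∑ ρ, pd ν (fun y => ζ y ρ) x * G x μ ρ

/-- A Killing pair `(ζ, b)`: `D⁻_μζ_ν + D⁺_νζ_μ + ∂_μb_ν − ∂_νb_μ = 0`. -/
def IsKillingPair {D : ℕ} (G B : (Fin D → ℝ) → Fin D → Fin D → ℝ)
    (ζ b : (Fin D → ℝ) → Fin D → ℝ) : Prop :=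
  ∀ (μ ν : Fin D) (x : Fin D → ℝ),
    Dm G B ζ μ ν x + Dp G B ζ ν μ x
      + pd μ (fun y => b y ν) x - pd ν (fun y => b y μ) x = 0

/-- The Euler–Lagrange expression `E_ρ[X]` of the sigma model
(world-sheet coordinates `x⁺ = 0`, `x⁻ = 1`, `√g = √(−det g)`). -/
def ELop {D : ℕ} (G B : (Fin D → ℝ) → Fin D → Fin D → ℝ)
    (g : (Fin 2 → ℝ) → Matrix (Fin 2) (Fin 2) ℝ)
    (X : (Fin 2 → ℝ) → Fin D → ℝ) (ρ : Fin D) (x : Fin 2 → ℝ) : ℝ :=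
  pd 0 (fun y =>
      (∑ β, Real.sqrt (-(g y).det) * (g y)⁻¹ 0 β *
          ∑ ν, G (X y) ρ ν * pd β (fun z => X z ν) y)
        + ∑ ν, B (X y) ρ ν * pd 1 (fun z => X z ν) y) x
    + pd 1 (fun y =>
      (∑ β, Real.sqrt (-(g y).det) * (g y)⁻¹ 1 β *
          ∑ ν, G (X y) ρ ν * pd β (fun z => X z ν) y)
        - ∑ ν, B (X y) ρ ν * pd 0 (fun z => X z ν) y) x
    - (Real.sqrt (-(g x).det) *
        ∑ α, ∑ β, (g x)⁻¹ α β *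
          ∑ μ, ∑ ν, pd α (fun z => X z μ) x * pd β (fun z => X z ν) x *
            pd ρ (fun w => G w μ ν) (X x)) / 2
    - ∑ μ, ∑ ν, pd ρ (fun w => B w μ ν) (X x) *
        pd 0 (fun z => X z μ) x * pd 1 (fun z => X z ν) x

/-- The Noether current `j⁺` associated with a Killing pair `(ζ, b)`. -/
def jP {D : ℕ} (G : (Fin D → ℝ) → Fin D → Fin D → ℝ)
    (g : (Fin 2 → ℝ) → Matrix (Fin 2) (Fin 2) ℝ)
    (ζ b : (Fin D → ℝ) → Fin D → ℝ)
    (X : (Fin 2 → ℝ) → Fin D → ℝ) (x : Fin 2 → ℝ) : ℝ :=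
  (∑ β, Real.sqrt (-(g x).det) * (g x)⁻¹ 0 β *
      ∑ μ, lowerV G ζ μ (X x) * pd β (fun z => X z μ) x)
    + ∑ μ, b (X x) μ * pd 1 (fun z => X z μ) x

/-- The Noether current `j⁻` associated with a Killing pair `(ζ, b)`. -/
def jM {D : ℕ} (G : (Fin D → ℝ) → Fin D → Fin D → ℝ)
    (g : (Fin 2 → ℝ) → Matrix (Fin 2) (Fin 2) ℝ)
    (ζ b : (Fin D → ℝ) → Fin D → ℝ)
    (X : (Fin 2 → ℝ) → Fin D → ℝ) (x : Fin 2 → ℝ) : ℝ :=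
  (∑ β, Real.sqrt (-(g x).det) * (g x)⁻¹ 1 β *
      ∑ μ, lowerV G ζ μ (X x) * pd β (fun z => X z μ) x)
    - ∑ μ, b (X x) μ * pd 0 (fun z => X z μ) x


open Finset Matrix

section Calculus

variable {n : ℕ} {f g : (Fin n → ℝ) → ℝ} {x : Fin n → ℝ}

lemma pd_add (μ : Fin n) (hf : DifferentiableAt ℝ f x) (hg : DifferentiableAt ℝ g x) :
    pd μ (fun y => f y + g y) x = pd μ f x + pd μ g x := by
  simp [pd, fderiv_fun_add hf hg]

lemma pd_sub (μ : Fin n) (hf : DifferentiableAt ℝ f x) (hg : DifferentiableAt ℝ g x) :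
    pd μ (fun y => f y - g y) x = pd μ f x - pd μ g x := by
  simp [pd, fderiv_fun_sub hf hg]

lemma pd_mul (μ : Fin n) (hf : DifferentiableAt ℝ f x) (hg : DifferentiableAt ℝ g x) :
    pd μ (fun y => f y * g y) x = pd μ f x * g x + f x * pd μ g x := by
  simp only [pd, fderiv_fun_mul hf hg, _root_.add_apply,
    _root_.smul_apply, smul_eq_mul]
  ring

lemma pd_sum {ι : Type*} (s : Finset ι) {F : ι → (Fin n → ℝ) → ℝ} (μ : Fin n)
    (hF : ∀ i ∈ s, DifferentiableAt ℝ (F i) x) :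
    pd μ (fun y => ∑ i ∈ s, F i y) x = ∑ i ∈ s, pd μ (F i) x := by
  simp [pd, fderiv_fun_sum hF]

lemma pd_comp {m : ℕ} {X : (Fin m → ℝ) → Fin n → ℝ} {x : Fin m → ℝ} (α : Fin m)
    (hf : DifferentiableAt ℝ f (X x)) (hX : ∀ μ, DifferentiableAt ℝ (fun y => X y μ) x) :
    pd α (fun y => f (X y)) x = ∑ ρ, pd ρ f (X x) * pd α (fun y => X y ρ) x := by
  have hdX : fderiv ℝ X x (Pi.single α 1) = fun ρ => pd α (fun y => X y ρ) x := by
    ext ρ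
    rw [show X = fun y ρ => X y ρ from rfl, fderiv_pi hX]
    rfl
  unfold pd
  rw [show (fun y => f (X y)) = f ∘ X from rfl, fderiv_comp x hf (differentiableAt_pi.2 hX),
    ContinuousLinearMap.comp_apply, hdX]
  conv_lhs => rw [pi_eq_sum_univ' (fun ρ => pd α (fun y => X y ρ) x)]
  simp [pd, mul_comm]

lemma pd_comm (hf : ContDiff ℝ (⊤ : ℕ∞) f) (α β : Fin n) :
    pd α (fun y => pd β f y) x = pd β (fun y => pd α f y) x := by
  have hsymm : IsSymmSndFDerivAt ℝ f x :=
    hf.contDiffAt.isSymmSndFDerivAt (by simp only [minSmoothness_of_isRCLikeNormedField]; norm_cast)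
  have hd : DifferentiableAt ℝ (fderiv ℝ f) x :=
    (hf.fderiv_right (m := 1) (by norm_cast)).differentiable (by simp) x
  have h : ∀ v w, fderiv ℝ (fun y => fderiv ℝ f y v) x w = fderiv ℝ (fderiv ℝ f) x w v := by
    intro v w
    simp [fderiv_clm_apply hd (differentiableAt_const v)]
  simp only [pd, h, hsymm.eq]

@[fun_prop]
lemma contDiff_pd (hf : ContDiff ℝ (⊤ : ℕ∞) f) (μ : Fin n) :
    ContDiff ℝ (⊤ : ℕ∞) (fun y => pd μ f y) :=
  (hf.fderiv_right (by simp)).clm_apply contDiff_const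

end Calculus

section VectorCalculus

variable {n : ℕ} {ι : Type*}

def pdVec (α : Fin n) (F : (Fin n → ℝ) → ι → ℝ) (y : Fin n → ℝ) : ι → ℝ :=
  fun i => pd α (fun z => F z i) y

def pdMat (ρ : Fin n) (T : (Fin n → ℝ) → Matrix ι ι ℝ) (p : Fin n → ℝ) : Matrix ι ι ℝ :=
  of fun μ ν => pd ρ (fun q => T q μ ν) p

def jacobian (F : (Fin n → ℝ) → ι → ℝ) (p : Fin n → ℝ) : Matrix ι (Fin n) ℝ :=
  of fun i σ => pd σ (fun q => F q i) p

lemma pd_dotProduct [Fintype ι] {u v : (Fin n → ℝ) → ι → ℝ} {x : Fin n → ℝ} (α : Fin n)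
    (hu : ∀ i, DifferentiableAt ℝ (fun y => u y i) x)
    (hv : ∀ i, DifferentiableAt ℝ (fun y => v y i) x) :
    pd α (fun y => u y ⬝ᵥ v y) x = pdVec α u x ⬝ᵥ v x + u x ⬝ᵥ pdVec α v x := by
  simp only [dotProduct]
  rw [pd_sum (F := fun i y => u y i * v y i) _ α fun i _ => (hu i).mul (hv i),
    ← sum_add_distrib]
  exact sum_congr rfl fun i _ => pd_mul α (hu i) (hv i)

lemma pdVec_comp {m : ℕ} {F : (Fin m → ℝ) → ι → ℝ} {X : (Fin n → ℝ) → Fin m → ℝ}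
    {x : Fin n → ℝ} (α : Fin n) (hF : ∀ i, DifferentiableAt ℝ (fun q => F q i) (X x))
    (hX : ∀ μ, DifferentiableAt ℝ (fun y => X y μ) x) :
    pdVec α (fun y => F (X y)) x = jacobian F (X x) *ᵥ pdVec α X x := by
  ext i
  exact pd_comp α (hF i) hX

variable {m : ℕ} {X : (Fin n → ℝ) → Fin m → ℝ} {x : Fin n → ℝ}

lemma differentiableAt_comp_of_contDiff {F : (Fin m → ℝ) → ι → ℝ}
    (hF : ∀ i, ContDiff ℝ (⊤ : ℕ∞) fun q => F q i) (hX : ∀ μ, ContDiff ℝ (⊤ : ℕ∞) fun y => X y μ)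
    (i : ι) : DifferentiableAt ℝ (fun y => F (X y) i) x :=
  ((hF i).comp (contDiff_pi.2 hX)).differentiable (by simp) x

/-- Pull-back commutes with the exterior derivative: the second derivatives of `X` cancel. -/
lemma pd_dotProduct_pdVec_sub {c : (Fin m → ℝ) → Fin m → ℝ}
    (hc : ∀ μ, ContDiff ℝ (⊤ : ℕ∞) fun q => c q μ) (hX : ∀ μ, ContDiff ℝ (⊤ : ℕ∞) fun y => X y μ)
    (α β : Fin n) :
    pd α (fun y => c (X y) ⬝ᵥ pdVec β X y) x - pd β (fun y => c (X y) ⬝ᵥ pdVec α X y) x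
      = pdVec α X x ⬝ᵥ ((jacobian c (X x))ᵀ - jacobian c (X x)) *ᵥ pdVec β X x := by
  have hcX := differentiableAt_comp_of_contDiff (x := x) hc hX
  have hdX : ∀ γ μ, DifferentiableAt ℝ (fun y => pdVec γ X y μ) x := fun γ μ =>
    (contDiff_pd (hX μ) γ).differentiable (by simp) x
  have hc' : ∀ μ, DifferentiableAt ℝ (fun q => c q μ) (X x) := fun μ =>
    (hc μ).differentiable (by simp) _
  have hX' : ∀ μ, DifferentiableAt ℝ (fun y => X y μ) x := fun μ =>
    (hX μ).differentiable (by simp) x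
  have hsymm : pdVec α (pdVec β X) x = pdVec β (pdVec α X) x := by
    ext μ
    exact pd_comm (hX μ) α β
  rw [pd_dotProduct α hcX (hdX β), pd_dotProduct β hcX (hdX α), hsymm, pdVec_comp α hc' hX',
    pdVec_comp β hc' hX', dotProduct_comm (_ *ᵥ pdVec α X x),
    dotProduct_comm (_ *ᵥ pdVec β X x), sub_mulVec, dotProduct_sub, mulVec_transpose,
    dotProduct_mulVec, dotProduct_mulVec, dotProduct_comm (pdVec α X x)]
  ring

lemma pd_current_add_pd_current {ζ c : (Fin m → ℝ) → Fin m → ℝ}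
    (hζ : ∀ μ, ContDiff ℝ (⊤ : ℕ∞) fun q => ζ q μ) (hc : ∀ μ, ContDiff ℝ (⊤ : ℕ∞) fun q => c q μ)
    (hX : ∀ μ, ContDiff ℝ (⊤ : ℕ∞) fun y => X y μ) {P Q : (Fin n → ℝ) → Fin m → ℝ}
    (hP : ∀ μ, DifferentiableAt ℝ (fun y => P y μ) x)
    (hQ : ∀ μ, DifferentiableAt ℝ (fun y => Q y μ) x) (α β : Fin n) :
    pd α (fun y => ζ (X y) ⬝ᵥ P y + c (X y) ⬝ᵥ pdVec β X y) x
      + pd β (fun y => ζ (X y) ⬝ᵥ Q y - c (X y) ⬝ᵥ pdVec α X y) x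
      = (jacobian ζ (X x) *ᵥ pdVec α X x) ⬝ᵥ P x + (jacobian ζ (X x) *ᵥ pdVec β X x) ⬝ᵥ Q x
        + ζ (X x) ⬝ᵥ (pdVec α P x + pdVec β Q x)
        + pdVec α X x ⬝ᵥ ((jacobian c (X x))ᵀ - jacobian c (X x)) *ᵥ pdVec β X x := by
  have hζX := differentiableAt_comp_of_contDiff (x := x) hζ hX
  have hcX := differentiableAt_comp_of_contDiff (x := x) hc hX
  have hdX : ∀ γ μ, DifferentiableAt ℝ (fun y => pdVec γ X y μ) x := fun γ μ =>
    (contDiff_pd (hX μ) γ).differentiable (by simp) x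
  have hζ' : ∀ μ, DifferentiableAt ℝ (fun q => ζ q μ) (X x) := fun μ =>
    (hζ μ).differentiable (by simp) _
  have hX' : ∀ μ, DifferentiableAt ℝ (fun y => X y μ) x := fun μ =>
    (hX μ).differentiable (by simp) x
  have hdot : ∀ {u v : (Fin n → ℝ) → Fin m → ℝ}, (∀ μ, DifferentiableAt ℝ (fun y => u y μ) x) →
      (∀ μ, DifferentiableAt ℝ (fun y => v y μ) x) →
      DifferentiableAt ℝ (fun y => u y ⬝ᵥ v y) x := by
    intro u v hu hv
    simp only [dotProduct]
    fun_prop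
  rw [pd_add α (hdot hζX hP) (hdot hcX (hdX β)), pd_sub β (hdot hζX hQ) (hdot hcX (hdX α)),
    pd_dotProduct α hζX hP, pd_dotProduct β hζX hQ, pdVec_comp α hζ' hX', pdVec_comp β hζ' hX',
    dotProduct_add]
  linear_combination pd_dotProduct_pdVec_sub (x := x) hc hX α β

end VectorCalculus

section WorldSheet

variable {g : (Fin 2 → ℝ) → Matrix (Fin 2) (Fin 2) ℝ}

/-- `√g g^{αβ}`. -/
def invMetricDensity (g : (Fin 2 → ℝ) → Matrix (Fin 2) (Fin 2) ℝ) (α β : Fin 2)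
    (y : Fin 2 → ℝ) : ℝ :=
  Real.sqrt (-(g y).det) * (g y)⁻¹ α β

lemma contDiff_invMetricDensity (hgs : ∀ α β, ContDiff ℝ (⊤ : ℕ∞) fun y => g y α β)
    (hgdet : ∀ y, (g y).det < 0) (α β : Fin 2) :
    ContDiff ℝ (⊤ : ℕ∞) (invMetricDensity g α β) := by
  have hdet : ContDiff ℝ (⊤ : ℕ∞) fun y => (g y).det := by
    simp only [det_fin_two]
    fun_prop
  have hadj : ContDiff ℝ (⊤ : ℕ∞) fun y => (g y).adjugate α β := by
    fin_cases α <;> fin_cases β <;>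
      simp only [Fin.zero_eta, Fin.mk_one, Fin.isValue, adjugate_fin_two, of_apply, cons_val',
        cons_val_zero, cons_val_one, cons_val_fin_one] <;>
      fun_prop
  have hinv : ContDiff ℝ (⊤ : ℕ∞) fun y => (g y)⁻¹ α β := by
    have h : (fun y => (g y)⁻¹ α β) = fun y => ((g y).det)⁻¹ * (g y).adjugate α β := by
      ext y
      simp [Matrix.inv_def, Ring.inverse_eq_inv']
    exact h ▸ (hdet.inv fun y => (hgdet y).ne).mul hadj
  exact (hdet.neg.sqrt fun y => by linarith [hgdet y]).mul hinv

lemma invMetricDensity_comm (hgsym : ∀ y α β, g y α β = g y β α) (α β : Fin 2)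
    (y : Fin 2 → ℝ) : invMetricDensity g α β y = invMetricDensity g β α y := by
  have hsymm : (g y).IsSymm := IsSymm.ext fun i j => hgsym y j i
  simp only [invMetricDensity, hsymm.inv.apply]

end WorldSheet

section Killing

variable {D : ℕ} {G B : (Fin D → ℝ) → Fin D → Fin D → ℝ} {ζ b : (Fin D → ℝ) → Fin D → ℝ}

lemma pd_congr_symm {n : ℕ} {T : (Fin n → ℝ) → Fin n → Fin n → ℝ}
    (hT : ∀ x μ ν, T x μ ν = T x ν μ) (ρ μ ν : Fin n) (x : Fin n → ℝ) :
    pd ρ (fun y => T y μ ν) x = pd ρ (fun y => T y ν μ) x := by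
  simp only [hT _ μ ν]

lemma pd_congr_antisymm {n : ℕ} {T : (Fin n → ℝ) → Fin n → Fin n → ℝ}
    (hT : ∀ x μ ν, T x μ ν = -T x ν μ) (ρ μ ν : Fin n) (x : Fin n → ℝ) :
    pd ρ (fun y => T y μ ν) x = -pd ρ (fun y => T y ν μ) x := by
  simp only [hT _ μ ν, pd, fderiv_fun_neg, _root_.neg_apply]

lemma Htor_swap (hBanti : ∀ x μ ν, B x μ ν = -B x ν μ) (μ ν ρ : Fin D) (x : Fin D → ℝ) :
    Htor B μ ν ρ x = -Htor B ν μ ρ x := by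
  simp only [Htor, pd_congr_antisymm hBanti _ μ ν, pd_congr_antisymm hBanti _ ν ρ,
    pd_congr_antisymm hBanti _ ρ μ]
  ring

lemma lieG_comm (hGsym : ∀ x μ ν, G x μ ν = G x ν μ) (μ ν : Fin D) (x : Fin D → ℝ) :
    lieG G ζ μ ν x = lieG G ζ ν μ x := by
  simp only [lieG, pd_congr_symm hGsym _ μ ν, hGsym x μ, hGsym x ν]
  ring

lemma Dm_add_Dp (hGsym : ∀ x μ ν, G x μ ν = G x ν μ) (hBanti : ∀ x μ ν, B x μ ν = -B x ν μ)
    (μ ν : Fin D) (x : Fin D → ℝ) :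
    Dm G B ζ μ ν x + Dp G B ζ ν μ x = lieG G ζ μ ν x + ∑ ρ, ζ x ρ * Htor B μ ν ρ x := by
  simp only [Dm, Dp, lieG, ← sum_add_distrib]
  refine sum_congr rfl fun ρ _ => ?_
  simp only [GamM, GamP, Gam, Htor]
  linear_combination pd μ (fun y => ζ y ρ) x * hGsym x ν ρ
    + ζ x ρ / 2 * (pd_congr_symm hGsym μ ρ ν x + pd_congr_symm hGsym ρ ν μ x
      + pd_congr_symm hGsym ν ρ μ x - pd_congr_antisymm hBanti μ ρ ν x
      - pd_congr_antisymm hBanti ρ ν μ x - pd_congr_antisymm hBanti ν μ ρ x)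

/-- `(ζ ⌟ H + db)_{μν}`: the antisymmetric part of the Killing pair equation, whose symmetric
part is `lieG`. -/
def killingB (B : (Fin D → ℝ) → Fin D → Fin D → ℝ) (ζ b : (Fin D → ℝ) → Fin D → ℝ)
    (μ ν : Fin D) (x : Fin D → ℝ) : ℝ :=
  ∑ ρ, ζ x ρ * Htor B μ ν ρ x + pd μ (fun y => b y ν) x - pd ν (fun y => b y μ) x

lemma IsKillingPair.lieG_eq_zero (hK : IsKillingPair G B ζ b)
    (hGsym : ∀ x μ ν, G x μ ν = G x ν μ) (hBanti : ∀ x μ ν, B x μ ν = -B x ν μ)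
    (μ ν : Fin D) (x : Fin D → ℝ) : lieG G ζ μ ν x = 0 := by
  have hμν := hK μ ν x
  have hνμ := hK ν μ x
  rw [Dm_add_Dp hGsym hBanti] at hμν hνμ
  simp only [lieG_comm hGsym ν μ, Htor_swap hBanti ν μ, mul_neg, sum_neg_distrib] at hνμ
  linarith

lemma IsKillingPair.killingB_eq_zero (hK : IsKillingPair G B ζ b)
    (hGsym : ∀ x μ ν, G x μ ν = G x ν μ) (hBanti : ∀ x μ ν, B x μ ν = -B x ν μ)
    (μ ν : Fin D) (x : Fin D → ℝ) : killingB B ζ b μ ν x = 0 := by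
  have h := hK μ ν x
  rw [Dm_add_Dp hGsym hBanti, hK.lieG_eq_zero hGsym hBanti] at h
  simpa only [killingB, zero_add, add_sub_assoc] using h

lemma sum_smul_pdMat_add_jacobian_eq_lieG (p : Fin D → ℝ) :
    ∑ ρ, ζ p ρ • pdMat ρ G p + (jacobian ζ p)ᵀ * of (G p) + of (G p) * jacobian ζ p
      = of fun μ ν => lieG G ζ μ ν p := by
  ext μ ν
  simp only [Matrix.add_apply, Matrix.sum_apply, Matrix.smul_apply, mul_apply, transpose_apply,
    pdMat, jacobian, of_apply, smul_eq_mul, lieG, mul_comm (G p μ _)]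

lemma contDiff_sub_vecMul (hζ : SmoothVF ζ) (hb : SmoothVF b) (hBs : Smooth2T B) (μ : Fin D) :
    ContDiff ℝ (⊤ : ℕ∞) fun q => (b q - ζ q ᵥ* of (B q)) μ := by
  simp only [Pi.sub_apply, vecMul, dotProduct, of_apply]
  exact (hb μ).sub (ContDiff.sum fun ρ _ => (hζ ρ).mul (hBs ρ μ))

lemma jacobian_sub_vecMul (hζ : SmoothVF ζ) (hb : SmoothVF b) (hBs : Smooth2T B)
    (p : Fin D → ℝ) (μ ν : Fin D) :
    jacobian (fun q => b q - ζ q ᵥ* of (B q)) p ν μ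
      = pd μ (fun q => b q ν) p
        - ∑ ρ, (pd μ (fun q => ζ q ρ) p * B p ρ ν + ζ p ρ * pd μ (fun q => B q ρ ν) p) := by
  have hd : ∀ {f : (Fin D → ℝ) → ℝ}, Sm f → DifferentiableAt ℝ f p := fun hf =>
    hf.differentiable (by simp) p
  simp only [jacobian, of_apply, Pi.sub_apply, vecMul, dotProduct]
  rw [pd_sub μ (hd (hb ν)) (.fun_sum fun ρ _ => (hd (hζ ρ)).fun_mul (hd (hBs ρ ν))),
    pd_sum (F := fun ρ q => ζ q ρ * B q ρ ν) _ μ fun ρ _ => (hd (hζ ρ)).fun_mul (hd (hBs ρ ν))]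
  simp only [pd_mul μ (hd (hζ _)) (hd (hBs _ ν))]

lemma sum_smul_pdMat_add_curl_eq_killingB (hζ : SmoothVF ζ) (hb : SmoothVF b)
    (hBs : Smooth2T B) (hBanti : ∀ x μ ν, B x μ ν = -B x ν μ) (p : Fin D → ℝ) :
    ∑ ρ, ζ p ρ • pdMat ρ B p + (jacobian ζ p)ᵀ * of (B p) - (of (B p))ᵀ * jacobian ζ p
      + ((jacobian (fun q => b q - ζ q ᵥ* of (B q)) p)ᵀ
        - jacobian (fun q => b q - ζ q ᵥ* of (B q)) p)
      = of fun μ ν => killingB B ζ b μ ν p := by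
  ext μ ν
  simp only [Matrix.add_apply, Matrix.sub_apply, transpose_apply, jacobian_sub_vecMul hζ hb hBs]
  simp only [Matrix.sum_apply, Matrix.smul_apply, mul_apply, transpose_apply, pdMat, jacobian,
    of_apply, smul_eq_mul, killingB, Htor, pd_congr_antisymm hBanti μ ν, mul_add, mul_neg,
    sum_add_distrib, sum_neg_distrib, mul_comm (B p _ μ)]
  ring

lemma IsKillingPair.sum_smul_pdMat_add_jacobian_eq_zero (hK : IsKillingPair G B ζ b)
    (hGsym : ∀ x μ ν, G x μ ν = G x ν μ) (hBanti : ∀ x μ ν, B x μ ν = -B x ν μ)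
    (p : Fin D → ℝ) :
    ∑ ρ, ζ p ρ • pdMat ρ G p + (jacobian ζ p)ᵀ * of (G p) + of (G p) * jacobian ζ p = 0 := by
  rw [sum_smul_pdMat_add_jacobian_eq_lieG]
  exact ext fun μ ν => hK.lieG_eq_zero hGsym hBanti μ ν p

lemma IsKillingPair.sum_smul_pdMat_add_curl_eq_zero (hK : IsKillingPair G B ζ b)
    (hGsym : ∀ x μ ν, G x μ ν = G x ν μ) (hBanti : ∀ x μ ν, B x μ ν = -B x ν μ)
    (hζ : SmoothVF ζ) (hb : SmoothVF b) (hBs : Smooth2T B) (p : Fin D → ℝ) :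
    ∑ ρ, ζ p ρ • pdMat ρ B p + (jacobian ζ p)ᵀ * of (B p) - (of (B p))ᵀ * jacobian ζ p
      + ((jacobian (fun q => b q - ζ q ᵥ* of (B q)) p)ᵀ
        - jacobian (fun q => b q - ζ q ᵥ* of (B q)) p) = 0 := by
  rw [sum_smul_pdMat_add_curl_eq_killingB hζ hb hBs hBanti]
  exact ext fun μ ν => hK.killingB_eq_zero hGsym hBanti μ ν p

end Killing

section NoetherAlgebra

variable {n : Type*} [Fintype n]

lemma dotProduct_fun_dotProduct_mulVec (z u v : n → ℝ) (M : n → Matrix n n ℝ) :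
    (z ⬝ᵥ fun ρ => u ⬝ᵥ M ρ *ᵥ v) = u ⬝ᵥ (∑ ρ, z ρ • M ρ) *ᵥ v := by
  simp only [sum_mulVec, dotProduct_sum, smul_mulVec, dotProduct_smul, smul_eq_mul]
  rfl

lemma dotProduct_transpose_mul_mulVec (J M : Matrix n n ℝ) (u v : n → ℝ) :
    u ⬝ᵥ (Jᵀ * M) *ᵥ v = (J *ᵥ u) ⬝ᵥ M *ᵥ v := by
  rw [← mulVec_mulVec, dotProduct_mulVec, vecMul_transpose]

lemma sum_sum_mul_dotProduct_mulVec (s : Fin 2 → Fin 2 → ℝ) (hs : ∀ α β, s α β = s β α)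
    (A : Fin 2 → n → ℝ) (J M : Matrix n n ℝ) (hM : Mᵀ = M) :
    ∑ α, ∑ β, s α β * ((J *ᵥ A α) ⬝ᵥ M *ᵥ A β)
      = (∑ α, ∑ β, s α β * (A α ⬝ᵥ (Jᵀ * M + M * J) *ᵥ A β)) / 2 := by
  have hswap : ∑ α, ∑ β, s α β * ((J *ᵥ A β) ⬝ᵥ M *ᵥ A α)
      = ∑ α, ∑ β, s α β * ((J *ᵥ A α) ⬝ᵥ M *ᵥ A β) := by
    rw [sum_comm]
    simp only [hs]
  have hexp : ∀ u v : n → ℝ, u ⬝ᵥ (Jᵀ * M + M * J) *ᵥ v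
      = (J *ᵥ u) ⬝ᵥ M *ᵥ v + (J *ᵥ v) ⬝ᵥ M *ᵥ u := by
    intro u v
    rw [add_mulVec, dotProduct_add, dotProduct_transpose_mul_mulVec, ← mulVec_mulVec,
      dotProduct_mulVec u M, ← mulVec_transpose, hM, dotProduct_comm (M *ᵥ u)]
  simp only [hexp, mul_add, sum_add_distrib, hswap]
  ring

/-- In the application `s = √g g^{αβ}`, `A α = ∂_αX`, `z = ζ`, `J = ∂ζ`, `Γ ρ = ∂_ρG`,
`Θ ρ = ∂_ρB` and `C = dc`, and the left-hand side is `∂_α j^α` once the Euler–Lagrange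
equations have been used. -/
lemma noether_identity (s : Fin 2 → Fin 2 → ℝ) (hs : ∀ α β, s α β = s β α) (A : Fin 2 → n → ℝ)
    (z : n → ℝ) (J Gm Bm C : Matrix n n ℝ) (hGm : Gmᵀ = Gm) (Γ Θ : n → Matrix n n ℝ)
    (hL : ∑ ρ, z ρ • Γ ρ + Jᵀ * Gm + Gm * J = 0)
    (hB : ∑ ρ, z ρ • Θ ρ + Jᵀ * Bm - Bmᵀ * J + C = 0) :
    (∑ β, s 0 β * ((J *ᵥ A 0) ⬝ᵥ Gm *ᵥ A β) + (J *ᵥ A 0) ⬝ᵥ Bm *ᵥ A 1)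
      + (∑ β, s 1 β * ((J *ᵥ A 1) ⬝ᵥ Gm *ᵥ A β) - (J *ᵥ A 1) ⬝ᵥ Bm *ᵥ A 0)
      + (z ⬝ᵥ fun ρ => (∑ α, ∑ β, s α β * (A α ⬝ᵥ Γ ρ *ᵥ A β)) / 2 + A 0 ⬝ᵥ Θ ρ *ᵥ A 1)
      + A 0 ⬝ᵥ C *ᵥ A 1 = 0 := by
  have hsrc : (fun ρ => (∑ α, ∑ β, s α β * (A α ⬝ᵥ Γ ρ *ᵥ A β)) / 2 + A 0 ⬝ᵥ Θ ρ *ᵥ A 1)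
      = (2⁻¹ : ℝ) • (∑ α, ∑ β, s α β • fun ρ => A α ⬝ᵥ Γ ρ *ᵥ A β)
        + fun ρ => A 0 ⬝ᵥ Θ ρ *ᵥ A 1 := by
    ext ρ
    simp [div_eq_inv_mul, mul_add]
  have hZΓ : ∑ ρ, z ρ • Γ ρ = -(Jᵀ * Gm + Gm * J) := by
    rw [← sub_eq_zero, sub_neg_eq_add, ← add_assoc, hL]
  have hZΘ : ∑ ρ, z ρ • Θ ρ = -(Jᵀ * Bm - Bmᵀ * J + C) := by
    rw [← sub_eq_zero, sub_neg_eq_add, ← add_assoc, ← add_sub_assoc, hB]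
  have hBm : A 0 ⬝ᵥ (Jᵀ * Bm - Bmᵀ * J + C) *ᵥ A 1
      = (J *ᵥ A 0) ⬝ᵥ Bm *ᵥ A 1 - (J *ᵥ A 1) ⬝ᵥ Bm *ᵥ A 0 + A 0 ⬝ᵥ C *ᵥ A 1 := by
    rw [add_mulVec, sub_mulVec, dotProduct_add, dotProduct_sub, dotProduct_transpose_mul_mulVec,
      dotProduct_transpose_mul_mulVec, dotProduct_comm (Bm *ᵥ A 0)]
  have hGm := sum_sum_mul_dotProduct_mulVec s hs A J Gm hGm
  rw [hsrc]
  simp only [dotProduct_add, dotProduct_smul, dotProduct_sum, dotProduct_fun_dotProduct_mulVec,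
    smul_eq_mul, hZΓ, hZΘ, neg_mulVec, dotProduct_neg, mul_neg, sum_neg_distrib, hBm]
  simp only [Fin.sum_univ_two] at hGm ⊢
  linear_combination hGm

end NoetherAlgebra

section SigmaModel

variable {D : ℕ} {G B : (Fin D → ℝ) → Fin D → Fin D → ℝ}
  {g : (Fin 2 → ℝ) → Matrix (Fin 2) (Fin 2) ℝ} {X : (Fin 2 → ℝ) → Fin D → ℝ}
  {ζ b : (Fin D → ℝ) → Fin D → ℝ}

/-- The canonical momenta `P⁺_ρ`, `P⁻_ρ`: `ELop` is `∂₊P⁺_ρ + ∂₋P⁻_ρ` minus the force terms. -/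
def momentumP (G B : (Fin D → ℝ) → Fin D → Fin D → ℝ)
    (g : (Fin 2 → ℝ) → Matrix (Fin 2) (Fin 2) ℝ) (X : (Fin 2 → ℝ) → Fin D → ℝ)
    (y : Fin 2 → ℝ) : Fin D → ℝ := fun ρ =>
  ∑ β, invMetricDensity g 0 β y * (of (G (X y)) *ᵥ pdVec β X y) ρ
    + (of (B (X y)) *ᵥ pdVec 1 X y) ρ

def momentumM (G B : (Fin D → ℝ) → Fin D → Fin D → ℝ)
    (g : (Fin 2 → ℝ) → Matrix (Fin 2) (Fin 2) ℝ) (X : (Fin 2 → ℝ) → Fin D → ℝ)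
    (y : Fin 2 → ℝ) : Fin D → ℝ := fun ρ =>
  ∑ β, invMetricDensity g 1 β y * (of (G (X y)) *ᵥ pdVec β X y) ρ
    - (of (B (X y)) *ᵥ pdVec 0 X y) ρ

lemma contDiff_momentumP (hGs : Smooth2T G) (hBs : Smooth2T B)
    (hgs : ∀ α β, ContDiff ℝ (⊤ : ℕ∞) fun y => g y α β) (hgdet : ∀ y, (g y).det < 0)
    (hX : ∀ μ, ContDiff ℝ (⊤ : ℕ∞) fun y => X y μ) (ρ : Fin D) :
    ContDiff ℝ (⊤ : ℕ∞) fun y => momentumP G B g X y ρ := by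
  have hS := contDiff_invMetricDensity hgs hgdet
  have hXs : ContDiff ℝ (⊤ : ℕ∞) X := contDiff_pi.2 hX
  have hG : ∀ μ ν, ContDiff ℝ (⊤ : ℕ∞) fun p => G p μ ν := hGs
  have hB : ∀ μ ν, ContDiff ℝ (⊤ : ℕ∞) fun p => B p μ ν := hBs
  simp only [momentumP, mulVec, dotProduct, pdVec, of_apply]
  fun_prop

lemma contDiff_momentumM (hGs : Smooth2T G) (hBs : Smooth2T B)
    (hgs : ∀ α β, ContDiff ℝ (⊤ : ℕ∞) fun y => g y α β) (hgdet : ∀ y, (g y).det < 0)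
    (hX : ∀ μ, ContDiff ℝ (⊤ : ℕ∞) fun y => X y μ) (ρ : Fin D) :
    ContDiff ℝ (⊤ : ℕ∞) fun y => momentumM G B g X y ρ := by
  have hS := contDiff_invMetricDensity hgs hgdet
  have hXs : ContDiff ℝ (⊤ : ℕ∞) X := contDiff_pi.2 hX
  have hG : ∀ μ ν, ContDiff ℝ (⊤ : ℕ∞) fun p => G p μ ν := hGs
  have hB : ∀ μ ν, ContDiff ℝ (⊤ : ℕ∞) fun p => B p μ ν := hBs
  simp only [momentumM, mulVec, dotProduct, pdVec, of_apply]
  fun_prop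

lemma sum_sum_mul_mul_eq_dotProduct_mulVec {ι : Type*} [Fintype ι] (u v : ι → ℝ)
    (M : Matrix ι ι ℝ) : ∑ μ, ∑ ν, u μ * v ν * M μ ν = u ⬝ᵥ M *ᵥ v := by
  simp only [dotProduct, mulVec, mul_sum]
  exact sum_congr rfl fun μ _ => sum_congr rfl fun ν _ => by ring

lemma pdVec_momentumP_add_pdVec_momentumM {ρ : Fin D} {x : Fin 2 → ℝ}
    (hEL : ELop G B g X ρ x = 0) :
    pdVec 0 (momentumP G B g X) x ρ + pdVec 1 (momentumM G B g X) x ρ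
      = (∑ α, ∑ β, invMetricDensity g α β x *
          (pdVec α X x ⬝ᵥ pdMat ρ G (X x) *ᵥ pdVec β X x)) / 2
        + pdVec 0 X x ⬝ᵥ pdMat ρ B (X x) *ᵥ pdVec 1 X x := by
  rw [ELop, sub_sub, sub_eq_zero] at hEL
  refine hEL.trans ?_
  simp only [mul_sum, invMetricDensity, mul_assoc, ← sum_sum_mul_mul_eq_dotProduct_mulVec,
    pdVec, pdMat, of_apply]
  exact congrArg _ (sum_congr rfl fun μ _ => sum_congr rfl fun ν _ => by ring)

lemma dotProduct_momentumP (w : Fin D → ℝ) (y : Fin 2 → ℝ) :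
    w ⬝ᵥ momentumP G B g X y
      = ∑ β, invMetricDensity g 0 β y * (w ⬝ᵥ of (G (X y)) *ᵥ pdVec β X y)
        + w ⬝ᵥ of (B (X y)) *ᵥ pdVec 1 X y := by
  simp only [momentumP, dotProduct, mul_add, sum_add_distrib, mul_sum]
  rw [sum_comm]
  simp only [mul_left_comm]

lemma dotProduct_momentumM (w : Fin D → ℝ) (y : Fin 2 → ℝ) :
    w ⬝ᵥ momentumM G B g X y
      = ∑ β, invMetricDensity g 1 β y * (w ⬝ᵥ of (G (X y)) *ᵥ pdVec β X y)
        - w ⬝ᵥ of (B (X y)) *ᵥ pdVec 0 X y := by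
  simp only [momentumM, dotProduct, mul_sub, sum_sub_distrib, mul_sum]
  rw [sum_comm]
  simp only [mul_left_comm]

lemma dotProduct_mulVec_symm {ι : Type*} [Fintype ι] {M : Matrix ι ι ℝ}
    (hM : ∀ μ ν, M μ ν = M ν μ) (u v : ι → ℝ) : u ⬝ᵥ M *ᵥ v = (M *ᵥ u) ⬝ᵥ v := by
  rw [dotProduct_mulVec, ← mulVec_transpose, (IsSymm.ext fun i j => hM j i : M.IsSymm).eq]

lemma jP_eq (hGsym : ∀ x μ ν, G x μ ν = G x ν μ) :
    jP G g ζ b X = fun y => ζ (X y) ⬝ᵥ momentumP G B g X y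
      + (b (X y) - ζ (X y) ᵥ* of (B (X y))) ⬝ᵥ pdVec 1 X y := by
  ext y
  rw [dotProduct_momentumP, sub_dotProduct, ← dotProduct_mulVec]
  simp only [dotProduct_mulVec_symm (M := of (G (X y))) (hGsym (X y)), add_add_sub_cancel]
  rfl

lemma jM_eq (hGsym : ∀ x μ ν, G x μ ν = G x ν μ) :
    jM G g ζ b X = fun y => ζ (X y) ⬝ᵥ momentumM G B g X y
      - (b (X y) - ζ (X y) ᵥ* of (B (X y))) ⬝ᵥ pdVec 0 X y := by
  ext y
  rw [dotProduct_momentumM, sub_dotProduct, ← dotProduct_mulVec]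
  simp only [dotProduct_mulVec_symm (M := of (G (X y))) (hGsym (X y)), sub_sub_sub_cancel_right]
  rfl

end SigmaModel

theorem stmt19_general {D : ℕ}
    (G B : (Fin D → ℝ) → Fin D → Fin D → ℝ)
    (hGs : Smooth2T G) (hGsym : ∀ x μ ν, G x μ ν = G x ν μ)
    (hBs : Smooth2T B) (hBanti : ∀ x μ ν, B x μ ν = -B x ν μ)
    (g : (Fin 2 → ℝ) → Matrix (Fin 2) (Fin 2) ℝ)
    (hgs : ∀ α β, ContDiff ℝ (⊤ : ℕ∞) fun x => g x α β)
    (hgsym : ∀ x α β, g x α β = g x β α)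
    (hgdet : ∀ x, (g x).det < 0)
    (ζ b : (Fin D → ℝ) → Fin D → ℝ) (hζ : SmoothVF ζ) (hb : SmoothVF b)
    (hK : IsKillingPair G B ζ b)
    (X : (Fin 2 → ℝ) → Fin D → ℝ) (hX : ∀ μ, ContDiff ℝ (⊤ : ℕ∞) fun y => X y μ)
    (hEL : ∀ ρ x, ELop G B g X ρ x = 0) :
    ∀ x, pd 0 (fun y => jP G g ζ b X y) x + pd 1 (fun y => jM G g ζ b X y) x = 0 := by
  intro x
  have hdivP : pdVec 0 (momentumP G B g X) x + pdVec 1 (momentumM G B g X) x = _ :=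
    funext fun ρ => pdVec_momentumP_add_pdVec_momentumM (hEL ρ x)
  rw [jP_eq (B := B) hGsym, jM_eq (B := B) hGsym,
    pd_current_add_pd_current hζ (contDiff_sub_vecMul hζ hb hBs) hX
      (fun μ => (contDiff_momentumP hGs hBs hgs hgdet hX μ).differentiable (by simp) x)
      (fun μ => (contDiff_momentumM hGs hBs hgs hgdet hX μ).differentiable (by simp) x) 0 1,
    dotProduct_momentumP, dotProduct_momentumM, hdivP]
  exact noether_identity (fun α β => invMetricDensity g α β x)
    (fun α β => invMetricDensity_comm hgsym α β x) (fun α => pdVec α X x) (ζ (X x))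
    (jacobian ζ (X x)) (of (G (X x))) (of (B (X x)))
    ((jacobian (fun q => b q - ζ q ᵥ* of (B q)) (X x))ᵀ
      - jacobian (fun q => b q - ζ q ᵥ* of (B q)) (X x))
    (IsSymm.ext fun μ ν => hGsym _ ν μ) (fun ρ => pdMat ρ G (X x)) (fun ρ => pdMat ρ B (X x))
    (hK.sum_smul_pdMat_add_jacobian_eq_zero hGsym hBanti (X x))
    (hK.sum_smul_pdMat_add_curl_eq_zero hGsym hBanti hζ hb hBs (X x))

/-- On-shell conservation of the Noether current associated with a Killing pair:
if the Euler–Lagrange equations hold identically then `∂₊j⁺ + ∂₋j⁻ = 0`. -/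
theorem stmt19 {D : ℕ} (hD : 1 ≤ D)
    (G B : (Fin D → ℝ) → Fin D → Fin D → ℝ)
    (hGs : Smooth2T G) (hGsym : ∀ x μ ν, G x μ ν = G x ν μ)
    (hBs : Smooth2T B) (hBanti : ∀ x μ ν, B x μ ν = -B x ν μ)
    (g : (Fin 2 → ℝ) → Matrix (Fin 2) (Fin 2) ℝ)
    (hgs : ∀ α β, ContDiff ℝ (⊤ : ℕ∞) fun x => g x α β)
    (hgsym : ∀ x α β, g x α β = g x β α)
    (hgdet : ∀ x, (g x).det < 0)
    (ζ b : (Fin D → ℝ) → Fin D → ℝ) (hζ : SmoothVF ζ) (hb : SmoothVF b)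
    (hK : IsKillingPair G B ζ b)
    (X : (Fin 2 → ℝ) → Fin D → ℝ) (hX : ∀ μ, ContDiff ℝ (⊤ : ℕ∞) fun y => X y μ)
    (hEL : ∀ ρ x, ELop G B g X ρ x = 0) :
    ∀ x, pd 0 (fun y => jP G g ζ b X y) x + pd 1 (fun y => jM G g ζ b X y) x = 0 :=
  stmt19_general G B hGs hGsym hBs hBanti g hgs hgsym hgdet ζ b hζ hb hK X hX hEL
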